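/- arXiv:2510.27360 — 4 statements merged into one kernel-verified Lean document; each statement's English description precedes it below -/
import Mathlib

section
/- For f ∈ C¹((a,b)) and any x ∈ (a,b), the normalized oscillation over shrinking centered intervals satisfies lim_{ε→0} (1/ε)·osc(f, (x-ε/2, x+ε/2)) = (1/4)|f'(x)|. -/
open MeasureTheory Set Filter
open scoped ENNReal

/-- Mean oscillation of `f` over the interval `(x, y)`. -/
noncomputable def oscI (f : ℝ → ℝ) (x y : ℝ) : ℝ :=
  (y - x)⁻¹ * ∫ t in x..y, |f t - (y - x)⁻¹ * ∫ s in x..y, f s|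

/-- Total variation of the distributional derivative of `f` on `(x, y)`:
the supremum of `∫ f φ'` over smooth `φ` supported in `(x, y)` with `‖φ‖_∞ ≤ 1`. -/
noncomputable def varD (f : ℝ → ℝ) (x y : ℝ) : ℝ≥0∞ :=
  ⨆ φ : {φ : ℝ → ℝ // ContDiff ℝ (⊤ : ℕ∞) φ ∧ HasCompactSupport φ ∧
      tsupport φ ⊆ Set.Ioo x y ∧ ∀ t, |φ t| ≤ 1},
    ENNReal.ofReal (∫ t in x..y, f t * deriv (φ : ℝ → ℝ) t)

lemma integral_abs_symm (w : ℝ) (hw : 0 ≤ w) : ∫ s in (-w)..w, |s| = w ^ 2 := by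
  have hint : ∀ p q : ℝ, IntervalIntegrable (fun s : ℝ => |s|) volume p q :=
    fun p q => (continuous_abs.intervalIntegrable p q)
  have h1 : ∫ s in (-w)..(0:ℝ), |s| = w ^ 2 / 2 := by
    rw [intervalIntegral.integral_congr (g := fun s => -s) ?_]
    · rw [intervalIntegral.integral_neg, integral_id]; ring
    · intro s hs
      rw [Set.uIcc_of_le (by linarith : -w ≤ (0:ℝ))] at hs
      exact abs_of_nonpos hs.2
  have h2 : ∫ s in (0:ℝ)..w, |s| = w ^ 2 / 2 := by
    rw [intervalIntegral.integral_congr (g := fun s => s) ?_]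
    · rw [integral_id]; ring
    · intro s hs
      rw [Set.uIcc_of_le hw] at hs
      exact abs_of_nonneg hs.1
  rw [← intervalIntegral.integral_add_adjacent_intervals (hint (-w) 0) (hint 0 w), h1, h2]
  ring

set_option maxHeartbeats 1000000 in
/-- For `f ∈ C¹((a,b))` and `x ∈ (a,b)`, the normalized oscillation over shrinking
centered intervals tends to `(1/4)|f'(x)|`. -/
theorem osc_rescaled_limit_C1 (a b : ℝ) (hab : a < b) (f f' : ℝ → ℝ)
    (hderiv : ∀ t ∈ Set.Ioo a b, HasDerivAt f (f' t) t)
    (hcont : ContinuousOn f' (Set.Ioo a b))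
    (x : ℝ) (hx : x ∈ Set.Ioo a b) :
    Tendsto (fun ε : ℝ => ε⁻¹ * oscI f (x - ε / 2) (x + ε / 2))
      (nhdsWithin 0 (Set.Ioi 0)) (nhds ((1 / 4) * |f' x|)) := by
  obtain ⟨hax, hxb⟩ := hx
  set c := f' x with hc
  rw [Metric.tendsto_nhdsWithin_nhds]
  intro η hη
  have hη2 : 0 < η / 2 := by positivity
  have hcx : ContinuousAt f' x :=
    hcont.continuousAt (isOpen_Ioo.mem_nhds ⟨hax, hxb⟩)
  obtain ⟨r₀, hr₀, hball⟩ := Metric.continuousAt_iff.mp hcx (η / 2) hη2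
  refine ⟨min r₀ (min (x - a) (b - x)), lt_min hr₀ (lt_min (by linarith) (by linarith)), ?_⟩
  intro ε hε hdist
  rw [Real.dist_eq, sub_zero, abs_of_pos hε] at hdist
  have hεr₀ : ε < r₀ := lt_of_lt_of_le hdist (min_le_left _ _)
  have hεa : ε < x - a := lt_of_lt_of_le hdist ((min_le_right _ _).trans (min_le_left _ _))
  have hεb : ε < b - x := lt_of_lt_of_le hdist ((min_le_right _ _).trans (min_le_right _ _))
  have hε0 : (0:ℝ) < ε := hε
  have hεne : ε ≠ 0 := ne_of_gt hε0
  set u := x - ε / 2 with hu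
  set v := x + ε / 2 with hv
  have huv : u < v := by simp only [hu, hv]; linarith
  have hvu : v - u = ε := by simp only [hu, hv]; ring
  have hsub : Set.Icc u v ⊆ Set.Ioo a b := by
    intro t ht
    obtain ⟨h1, h2⟩ := ht
    rw [hu] at h1; rw [hv] at h2
    exact ⟨by linarith, by linarith⟩
  -- f' close to c on Icc u v
  have hf'cl : ∀ t ∈ Set.Icc u v, ‖f' t - c‖ ≤ η / 2 := by
    intro t ht
    obtain ⟨h1, h2⟩ := ht
    rw [hu] at h1; rw [hv] at h2
    have hd : dist t x < r₀ := by
      rw [Real.dist_eq, abs_lt]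
      exact ⟨by linarith, by linarith⟩
    have := hball hd
    rw [Real.dist_eq] at this
    exact le_of_lt this
  -- remainder term
  set h := fun t => f t - f x - c * (t - x) with hh
  have hhderiv : ∀ t ∈ Set.Icc u v, HasDerivWithinAt h (f' t - c) (Set.Icc u v) t := by
    intro t ht
    have h1 : HasDerivAt f (f' t) t := hderiv t (hsub ht)
    have h2 : HasDerivAt (fun s => f x + c * (s - x)) c t := by
      have := (((hasDerivAt_id t).sub_const x).const_mul c).const_add (f x)
      simpa using this
    have h3 := h1.sub h2
    have heq : h = fun s => f s - (f x + c * (s - x)) := by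
      funext s; simp only [hh]; ring
    rw [heq]
    exact h3.hasDerivWithinAt
  have hx0 : x ∈ Set.Icc u v := ⟨by rw [hu]; linarith, by rw [hv]; linarith⟩
  have hmvt : ∀ t ∈ Set.Icc u v, |h t| ≤ η / 2 * (ε / 2) := by
    intro t ht
    have hb := Convex.norm_image_sub_le_of_norm_hasDerivWithin_le hhderiv hf'cl
      (convex_Icc u v) hx0 ht
    have hhx : h x = 0 := by simp [hh]
    rw [hhx, sub_zero, Real.norm_eq_abs, Real.norm_eq_abs] at hb
    have htx : |t - x| ≤ ε / 2 := by
      rw [abs_le]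
      obtain ⟨h1, h2⟩ := ht; rw [hu] at h1; rw [hv] at h2
      exact ⟨by linarith, by linarith⟩
    calc |h t| ≤ η / 2 * |t - x| := hb
      _ ≤ η / 2 * (ε / 2) := mul_le_mul_of_nonneg_left htx hη2.le
  -- integrability
  have hfc : ContinuousOn f (Set.Icc u v) := fun t ht =>
    ((hderiv t (hsub ht)).continuousAt).continuousWithinAt
  have hfint : IntervalIntegrable f volume u v := by
    apply ContinuousOn.intervalIntegrable
    rwa [Set.uIcc_of_le huv.le]
  have hBint : IntervalIntegrable (fun t => c * (t - x)) volume u v :=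
    Continuous.intervalIntegrable (continuous_const.mul (continuous_id.sub continuous_const)) u v
  have hgint : IntervalIntegrable (fun t => f x + c * (t - x)) volume u v :=
    Continuous.intervalIntegrable (continuous_const.add (continuous_const.mul (continuous_id.sub continuous_const))) u v
  have hhint : IntervalIntegrable h volume u v := by
    have heq : h = fun t => f t - (f x + c * (t - x)) := by
      funext s; simp only [hh]; ring
    rw [heq]; exact hfint.sub hgint
  -- integral computations
  have Ilin : ∫ t in u..v, c * (t - x) = 0 := by
    rw [intervalIntegral.integral_const_mul,
      intervalIntegral.integral_comp_sub_right (fun s => s) x, integral_id, hu, hv]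
    ring
  have Iabs : ∫ t in u..v, |c * (t - x)| = |c| * (ε ^ 2 / 4) := by
    simp only [abs_mul]
    rw [intervalIntegral.integral_const_mul,
      intervalIntegral.integral_comp_sub_right (fun s => |s|) x]
    have h1 : u - x = -(ε / 2) := by rw [hu]; ring
    have h2 : v - x = ε / 2 := by rw [hv]; ring
    rw [h1, h2, integral_abs_symm (ε / 2) (by positivity)]
    ring
  have Ig : ∫ t in u..v, (f x + c * (t - x)) = ε * f x := by
    rw [intervalIntegral.integral_add (intervalIntegrable_const) hBint, Ilin,
      intervalIntegral.integral_const, hvu, smul_eq_mul]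
    ring
  set Ih := ∫ t in u..v, h t with hIh
  have If : ∫ t in u..v, f t = Ih + ε * f x := by
    rw [hIh, ← Ig, ← intervalIntegral.integral_add hhint hgint]
    apply intervalIntegral.integral_congr
    intro t _; simp only [hh]; ring
  have Ihb : |Ih| ≤ η / 2 * (ε / 2) * ε := by
    have hb := intervalIntegral.norm_integral_le_of_norm_le_const
      (C := η / 2 * (ε / 2)) (f := h) (a := u) (b := v) ?_
    · rw [Real.norm_eq_abs] at hb
      have : |v - u| = ε := by rw [hvu, abs_of_pos hε0]
      rwa [this] at hb
    · intro t ht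
      rw [Set.uIoc_of_le huv.le] at ht
      exact (Real.norm_eq_abs _) ▸ hmvt t (Set.Ioc_subset_Icc_self ht)
  set M := ε⁻¹ * Ih + f x with hM
  -- pointwise bound
  have hptw : ∀ t ∈ Set.uIoc u v, ‖|f t - M| - |c * (t - x)|‖ ≤ η / 2 * ε := by
    intro t ht
    rw [Set.uIoc_of_le huv.le] at ht
    have htI : t ∈ Set.Icc u v := Set.Ioc_subset_Icc_self ht
    have e1 : f t - M - c * (t - x) = h t - ε⁻¹ * Ih := by
      rw [hM]; simp only [hh]; ring
    have h1 : |f t - M - c * (t - x)| ≤ η / 2 * ε := by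
      rw [e1]
      calc |h t - ε⁻¹ * Ih| ≤ |h t| + |ε⁻¹ * Ih| := abs_sub _ _
        _ ≤ η / 2 * (ε / 2) + ε⁻¹ * (η / 2 * (ε / 2) * ε) := by
            refine add_le_add (hmvt t htI) ?_
            rw [abs_mul, abs_of_nonneg (inv_nonneg.mpr hε0.le)]
            exact mul_le_mul_of_nonneg_left Ihb (inv_nonneg.mpr hε0.le)
        _ = η / 2 * ε := by field_simp; ring
    rw [Real.norm_eq_abs]
    exact le_trans (abs_abs_sub_abs_le_abs_sub _ _) h1
  have hAabs : IntervalIntegrable (fun t => |f t - M|) volume u v :=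
    (hfint.sub intervalIntegrable_const).abs
  have hBabs : IntervalIntegrable (fun t => |c * (t - x)|) volume u v := hBint.abs
  have key : |(∫ t in u..v, |f t - M|) - |c| * (ε ^ 2 / 4)| ≤ η / 2 * ε * ε := by
    have hb := intervalIntegral.norm_integral_le_of_norm_le_const hptw
    rw [intervalIntegral.integral_sub hAabs hBabs, Iabs, Real.norm_eq_abs] at hb
    have hveq : |v - u| = ε := by rw [hvu, abs_of_pos hε0]
    rwa [hveq] at hb
  -- conclude
  have hMeq : ε⁻¹ * (Ih + ε * f x) = M := by
    rw [hM, mul_add, inv_mul_cancel_left₀ hεne]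
  have hosc : oscI f u v = ε⁻¹ * ∫ t in u..v, |f t - M| := by
    unfold oscI
    rw [hvu, If, hMeq]
  rw [Real.dist_eq, hosc]
  set S := ∫ t in u..v, |f t - M| with hS
  have harith : ε⁻¹ * (ε⁻¹ * S) - 1 / 4 * |c| =
      ε⁻¹ * ε⁻¹ * (S - |c| * (ε ^ 2 / 4)) := by
    field_simp
  rw [harith, abs_mul, abs_mul, abs_of_nonneg (inv_nonneg.mpr hε0.le)]
  have hfin : ε⁻¹ * ε⁻¹ * (η / 2 * ε * ε) = η / 2 := by
    field_simp
  calc ε⁻¹ * ε⁻¹ * |S - |c| * (ε ^ 2 / 4)|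
      ≤ ε⁻¹ * ε⁻¹ * (η / 2 * ε * ε) := by
        refine mul_le_mul_of_nonneg_left key ?_
        positivity
    _ = η / 2 := hfin
    _ < η := by linarith
end

section
/- If f : (a,b) → ℝ is locally integrable and the map I ↦ osc(f,I) on compactly contained open intervals extends to a locally finite positive Borel measure μ on (a,b), then f has locally bounded variation on (a,b) and (1/4)|Df| ≤ μ as measures. -/
open MeasureTheory Set Filter
open scoped ENNReal Topology

lemma oscI_nonneg (f : ℝ → ℝ) {x y : ℝ} (hxy : x ≤ y) : 0 ≤ oscI f x y := by
  unfold oscI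
  apply mul_nonneg (inv_nonneg.mpr (by linarith))
  exact intervalIntegral.integral_nonneg hxy (fun t _ => abs_nonneg _)

lemma integral_abs_eq (f : ℝ → ℝ) {x y : ℝ} (hxy : x < y) :
    (∫ t in x..y, |f t - (y - x)⁻¹ * ∫ s in x..y, f s|) = (y - x) * oscI f x y := by
  unfold oscI
  rw [← mul_assoc, mul_inv_cancel₀ (by linarith), one_mul]

lemma mean_diff_le (f : ℝ → ℝ) (p h : ℝ) (hh : 0 < h)
    (hint : IntegrableOn f (Icc p (p + 2*h))) :
    |h⁻¹ * (∫ s in p..p+h, f s) - h⁻¹ * ∫ s in p+h..p+2*h, f s| ≤ 2 * oscI f p (p + 2*h) := by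
  set C := (p + 2*h - p)⁻¹ * ∫ s in p..p+2*h, f s with hC
  have h1 : IntervalIntegrable f volume p (p+h) := by
    rw [intervalIntegrable_iff_integrableOn_Ioc_of_le (by linarith)]
    exact hint.mono_set (Ioc_subset_Icc_self.trans (Icc_subset_Icc le_rfl (by linarith)))
  have h2 : IntervalIntegrable f volume (p+h) (p+2*h) := by
    rw [intervalIntegrable_iff_integrableOn_Ioc_of_le (by linarith)]
    exact hint.mono_set (Ioc_subset_Icc_self.trans (Icc_subset_Icc (by linarith) le_rfl))
  have e1 : h⁻¹ * (∫ s in p..p+h, f s) - h⁻¹ * (∫ s in p+h..p+2*h, f s)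
      = h⁻¹ * (∫ s in p..p+h, (f s - C)) - h⁻¹ * ∫ s in p+h..p+2*h, (f s - C) := by
    rw [intervalIntegral.integral_sub h1 (intervalIntegrable_const),
        intervalIntegral.integral_sub h2 (intervalIntegrable_const),
        intervalIntegral.integral_const, intervalIntegral.integral_const]
    ring_nf
  have b1 : |∫ s in p..p+h, (f s - C)| ≤ ∫ s in p..p+h, |f s - C| := by
    apply intervalIntegral.abs_integral_le_integral_abs (by linarith)
  have b2 : |∫ s in p+h..p+2*h, (f s - C)| ≤ ∫ s in p+h..p+2*h, |f s - C| := by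
    apply intervalIntegral.abs_integral_le_integral_abs (by linarith)
  have hadd : (∫ s in p..p+h, |f s - C|) + (∫ s in p+h..p+2*h, |f s - C|)
      = ∫ s in p..p+2*h, |f s - C| := by
    exact intervalIntegral.integral_add_adjacent_intervals
      ((h1.sub intervalIntegrable_const).abs) ((h2.sub intervalIntegrable_const).abs)
  have htot : (∫ s in p..p+2*h, |f s - C|) = (p + 2*h - p) * oscI f p (p + 2*h) := by
    rw [hC]; exact integral_abs_eq f (by linarith)
  have key : |h⁻¹ * (∫ s in p..p+h, f s) - h⁻¹ * ∫ s in p+h..p+2*h, f s|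
      ≤ h⁻¹ * ((∫ s in p..p+h, |f s - C|) + (∫ s in p+h..p+2*h, |f s - C|)) := by
    rw [e1]
    calc |h⁻¹ * (∫ s in p..p+h, (f s - C)) - h⁻¹ * ∫ s in p+h..p+2*h, (f s - C)|
        ≤ |h⁻¹ * (∫ s in p..p+h, (f s - C))| + |h⁻¹ * ∫ s in p+h..p+2*h, (f s - C)| :=
          abs_sub _ _
      _ ≤ h⁻¹ * ((∫ s in p..p+h, |f s - C|) + (∫ s in p+h..p+2*h, |f s - C|)) := by
          rw [abs_mul, abs_mul, abs_of_pos (inv_pos.mpr hh), mul_add]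
          exact add_le_add (by nlinarith [inv_pos.mpr hh]) (by nlinarith [inv_pos.mpr hh])
  calc |h⁻¹ * (∫ s in p..p+h, f s) - h⁻¹ * ∫ s in p+h..p+2*h, f s|
      ≤ h⁻¹ * ((∫ s in p..p+h, |f s - C|) + (∫ s in p+h..p+2*h, |f s - C|)) := key
    _ = h⁻¹ * ((p + 2*h - p) * oscI f p (p + 2*h)) := by rw [hadd, htot]
    _ = 2 * oscI f p (p + 2*h) := by field_simp; ring

lemma osc_sum_le (a b : ℝ) (f : ℝ → ℝ) (μ : Measure ℝ)
    (hext : ∀ x y, a < x → x < y → y < b → μ (Ioo x y) = ENNReal.ofReal (oscI f x y))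
    {x y : ℝ} (hax : a < x) (hxy : x < y) (hyb : y < b)
    (s : Finset ℕ) (u v : ℕ → ℝ)
    (huv : ∀ i ∈ s, u i < v i ∧ Ioo (u i) (v i) ⊆ Ioo x y)
    (hdisj : (s : Set ℕ).Pairwise (fun i j => Disjoint (Ioo (u i) (v i)) (Ioo (u j) (v j)))) :
    ∑ i ∈ s, oscI f (u i) (v i) ≤ oscI f x y := by
  have hsub : ∀ i ∈ s, x ≤ u i ∧ v i ≤ y := by
    intro i hi
    obtain ⟨h1, h2⟩ := huv i hi
    rcases (Set.Ioo_subset_Ioo_iff h1).mp h2 with ⟨hx, hy⟩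
    exact ⟨hx, hy⟩
  have key : ENNReal.ofReal (∑ i ∈ s, oscI f (u i) (v i)) ≤ ENNReal.ofReal (oscI f x y) := by
    rw [ENNReal.ofReal_sum_of_nonneg (fun i hi => oscI_nonneg f (le_of_lt (huv i hi).1))]
    calc ∑ i ∈ s, ENNReal.ofReal (oscI f (u i) (v i))
        = ∑ i ∈ s, μ (Ioo (u i) (v i)) := by
          refine Finset.sum_congr rfl (fun i hi => ?_)
          rw [hext (u i) (v i) (lt_of_lt_of_le hax (hsub i hi).1) (huv i hi).1
            (lt_of_le_of_lt (hsub i hi).2 hyb)]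
      _ = μ (⋃ i ∈ s, Ioo (u i) (v i)) :=
          (measure_biUnion_finset hdisj (fun i _ => measurableSet_Ioo)).symm
      _ ≤ μ (Ioo x y) := measure_mono (Set.iUnion₂_subset (fun i hi => (huv i hi).2))
      _ = ENNReal.ofReal (oscI f x y) := hext x y hax hxy hyb
  rwa [ENNReal.ofReal_le_ofReal_iff (oscI_nonneg f hxy.le)] at key

lemma intInt_mul (f : ℝ → ℝ) {p q : ℝ} (hpq : p ≤ q) (hint : IntegrableOn f (Icc p q))
    (g : ℝ → ℝ) (hg : Continuous g) :
    IntervalIntegrable (fun t => f t * g t) volume p q := by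
  rw [intervalIntegrable_iff_integrableOn_Ioc_of_le hpq]
  exact hint.mono_set Ioc_subset_Icc_self |>.mul_continuousOn_of_subset
    hg.continuousOn measurableSet_Ioc isCompact_Icc Ioc_subset_Icc_self

lemma piece_bound (f : ℝ → ℝ) {p q : ℝ} (hpq : p < q) (hint : IntegrableOn f (Icc p q))
    (φ : ℝ → ℝ) (hφ : ContDiff ℝ (⊤ : ℕ∞) φ) (M : ℝ) (hM : ∀ t, |deriv φ t| ≤ M) :
    |(∫ t in p..q, f t * deriv φ t)
      - ((q - p)⁻¹ * ∫ s in p..q, f s) * (φ q - φ p)| ≤ M * ((q - p) * oscI f p q) := by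
  set c := (q - p)⁻¹ * ∫ s in p..q, f s with hc
  have hder : Continuous (deriv φ) := hφ.continuous_deriv (by simp)
  have hfi : IntervalIntegrable f volume p q := by
    rw [intervalIntegrable_iff_integrableOn_Ioc_of_le hpq.le]
    exact hint.mono_set Ioc_subset_Icc_self
  have hftc : (∫ t in p..q, deriv φ t) = φ q - φ p := by
    apply intervalIntegral.integral_deriv_eq_sub
    · exact fun t _ => (hφ.differentiable (by simp)).differentiableAt
    · exact hder.intervalIntegrable p q
  have hfmul : IntervalIntegrable (fun t => f t * deriv φ t) volume p q :=
    intInt_mul f hpq.le hint _ hder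
  have hsubint : IntervalIntegrable (fun t => (f t - c) * deriv φ t) volume p q := by
    have : IntervalIntegrable (fun t => f t - c) volume p q := hfi.sub intervalIntegrable_const
    rw [intervalIntegrable_iff_integrableOn_Ioc_of_le hpq.le] at this ⊢
    exact this.mul_continuousOn_of_subset hder.continuousOn measurableSet_Ioc
      isCompact_Icc Ioc_subset_Icc_self
  have e1 : (∫ t in p..q, f t * deriv φ t) - c * (φ q - φ p)
      = ∫ t in p..q, (f t - c) * deriv φ t := by
    rw [← hftc, ← intervalIntegral.integral_const_mul,
      ← intervalIntegral.integral_sub hfmul]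
    · congr 1; funext t; ring
    · exact (hder.intervalIntegrable p q).const_mul c
  rw [e1]
  calc |∫ t in p..q, (f t - c) * deriv φ t| ≤ ∫ t in p..q, |(f t - c) * deriv φ t| :=
        intervalIntegral.abs_integral_le_integral_abs hpq.le
    _ ≤ ∫ t in p..q, M * |f t - c| := by
        apply intervalIntegral.integral_mono_on hpq.le hsubint.abs
          (((hfi.sub intervalIntegrable_const).abs).const_mul M)
        intro t _
        rw [abs_mul, mul_comm]
        exact mul_le_mul_of_nonneg_right (hM t) (abs_nonneg _)
    _ = M * ∫ t in p..q, |f t - c| := intervalIntegral.integral_const_mul M _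
    _ = M * ((q - p) * oscI f p q) := by rw [hc, integral_abs_eq f hpq]

lemma abel_sum (c ψ : ℕ → ℝ) : ∀ n : ℕ,
    ∑ i ∈ Finset.range (n+1), c i * (ψ (i+1) - ψ i)
      = c n * ψ (n+1) - c 0 * ψ 0 + ∑ i ∈ Finset.range n, (c i - c (i+1)) * ψ (i+1) := by
  intro n
  induction n with
  | zero => simp; ring
  | succ m ih =>
      rw [Finset.sum_range_succ, ih, Finset.sum_range_succ]
      ring

/-- If the oscillation map of a locally integrable `f` extends to a locally finite positive
Borel measure `μ` on `(a, b)`, then `f ∈ BV_loc((a,b))` with `(1/4)|Df| ≤ μ`. -/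
theorem bvloc_of_osc_measure (a b : ℝ) (hab : a < b) (f : ℝ → ℝ)
    (hf : LocallyIntegrableOn f (Set.Ioo a b))
    (μ : Measure ℝ)
    (hext : ∀ x y, a < x → x < y → y < b →
      μ (Set.Ioo x y) = ENNReal.ofReal (oscI f x y)) :
    ∀ x y, a < x → x < y → y < b →
      varD f x y < ⊤ ∧ varD f x y ≤ 4 * μ (Set.Ioo x y) := by
  intro x y hax hxy hyb
  have hIcc : IntegrableOn f (Icc x y) :=
    hf.integrableOn_compact_subset (Icc_subset_Ioo hax hyb) isCompact_Icc
  have hosc0 : 0 ≤ oscI f x y := oscI_nonneg f hxy.le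
  have key : ∀ φ : ℝ → ℝ, ContDiff ℝ (⊤ : ℕ∞) φ → HasCompactSupport φ →
      tsupport φ ⊆ Set.Ioo x y → (∀ t, |φ t| ≤ 1) →
      (∫ t in x..y, f t * deriv φ t) ≤ 4 * oscI f x y := by
    intro φ hφ1 hφ2 hφ3 hφ4
    have hderc : Continuous (deriv φ) := hφ1.continuous_deriv (by simp)
    obtain ⟨M, hM⟩ := hderc.bounded_above_of_compact_support hφ2.deriv
    have hM' : ∀ t, |deriv φ t| ≤ M := fun t => by
      simpa [Real.norm_eq_abs] using hM t
    have hM0 : 0 ≤ M := le_trans (abs_nonneg _) (hM' 0)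
    have hφx : φ x = 0 := image_eq_zero_of_notMem_tsupport (fun hmem => (hφ3 hmem).1.false)
    have hφy : φ y = 0 := image_eq_zero_of_notMem_tsupport (fun hmem => (hφ3 hmem).2.false)
    have bound : ∀ m : ℕ, (∫ t in x..y, f t * deriv φ t)
        ≤ 4 * oscI f x y + (M * (y - x) * oscI f x y) * (1 / ((m : ℝ) + 1)) := by
      intro m
      set n : ℕ := m + 1 with hn
      set h : ℝ := (y - x) / n with hh_def
      have hnpos : (0:ℝ) < n := by exact_mod_cast Nat.succ_pos m
      have hh : 0 < h := div_pos (by linarith) hnpos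
      set t : ℕ → ℝ := fun i => x + i * h with ht_def
      have ht0 : t 0 = x := by simp [ht_def]
      have htn : t n = y := by
        simp only [ht_def, hh_def]
        field_simp
        ring
      have htdiff : ∀ i : ℕ, t (i+1) - t i = h := by
        intro i; simp only [ht_def]; push_cast; ring
      have ht_lt : ∀ {i j : ℕ}, i < j → t i < t j := by
        intro i j hij
        simp only [ht_def]
        have : (i : ℝ) < j := by exact_mod_cast hij
        nlinarith
      have ht_le : ∀ {i j : ℕ}, i ≤ j → t i ≤ t j := by
        intro i j hij
        rcases eq_or_lt_of_le hij with rfl | hlt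
        · exact le_rfl
        · exact (ht_lt hlt).le
      have htx : ∀ i : ℕ, x ≤ t i := fun i => ht0 ▸ ht_le (Nat.zero_le i)
      have hty : ∀ i : ℕ, i ≤ n → t i ≤ y := fun i hi => htn ▸ ht_le hi
      have hIccsub : ∀ i j : ℕ, j ≤ n → IntegrableOn f (Icc (t i) (t j)) :=
        fun i j hj => hIcc.mono_set (Icc_subset_Icc (htx i) (hty j hj))
      set c : ℕ → ℝ := fun i => h⁻¹ * ∫ s in t i..t (i+1), f s with hc_def
      set ψ : ℕ → ℝ := fun i => φ (t i) with hψ_def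
      have hdisjIoo : ∀ p q r s : ℝ, q ≤ r → Disjoint (Ioo p q) (Ioo r s) := by
        intro p q r s hqr
        rw [Set.Ioo_disjoint_Ioo]
        exact le_trans (min_le_left _ _) (le_trans hqr (le_max_right _ _))
      have hsplit : (∫ u in x..y, f u * deriv φ u)
          = ∑ i ∈ Finset.range n, ∫ u in t i..t (i+1), f u * deriv φ u := by
        rw [← ht0, ← htn]
        exact (intervalIntegral.sum_integral_adjacent_intervals (fun k hk =>
          intInt_mul f (ht_le (Nat.le_succ k)) (hIccsub k (k+1) hk) _ hderc)).symm
      have hpiece : ∀ i ∈ Finset.range n, (∫ u in t i..t (i+1), f u * deriv φ u)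
          ≤ c i * (ψ (i+1) - ψ i) + M * (h * oscI f (t i) (t (i+1))) := by
        intro i hi
        rw [Finset.mem_range] at hi
        have hlt : t i < t (i+1) := ht_lt (Nat.lt_succ_self i)
        have hb := piece_bound f hlt (hIccsub i (i+1) hi) φ hφ1 M hM'
        rw [htdiff i] at hb
        have h2 := (abs_le.mp hb).2
        have hceq : c i = h⁻¹ * ∫ s in t i..t (i+1), f s := rfl
        have hψeq : ψ (i+1) - ψ i = φ (t (i+1)) - φ (t i) := rfl
        rw [hceq, hψeq]
        linarith
      have hsum1 : ∑ i ∈ Finset.range n, oscI f (t i) (t (i+1)) ≤ oscI f x y := by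
        apply osc_sum_le a b f μ hext hax hxy hyb (Finset.range n)
          (fun i => t i) (fun i => t (i+1))
        · intro i hi
          rw [Finset.mem_range] at hi
          exact ⟨ht_lt (Nat.lt_succ_self i), fun z hz =>
            ⟨lt_of_le_of_lt (htx i) hz.1, lt_of_lt_of_le hz.2 (hty (i+1) hi)⟩⟩
        · intro i hi j hj hij
          rcases lt_or_gt_of_ne hij with hlt | hlt
          · exact hdisjIoo _ _ _ _ (ht_le hlt)
          · exact (hdisjIoo _ _ _ _ (ht_le hlt)).symm
      have hgen : ∀ s : Finset ℕ, (∀ i ∈ s, i + 2 ≤ n) →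
          ((s : Set ℕ).Pairwise (fun i j => i + 2 ≤ j ∨ j + 2 ≤ i)) →
          ∑ i ∈ s, oscI f (t i) (t (i+2)) ≤ oscI f x y := by
        intro s hs hpair
        apply osc_sum_le a b f μ hext hax hxy hyb s (fun i => t i) (fun i => t (i+2))
        · intro i hi
          exact ⟨ht_lt (by omega), fun z hz =>
            ⟨lt_of_le_of_lt (htx i) hz.1, lt_of_lt_of_le hz.2 (hty (i+2) (hs i hi))⟩⟩
        · intro i hi j hj hij
          rcases hpair hi hj hij with hle | hle
          · exact hdisjIoo _ _ _ _ (ht_le hle)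
          · exact (hdisjIoo _ _ _ _ (ht_le hle)).symm
      have hA : ∑ i ∈ Finset.range n, c i * (ψ (i+1) - ψ i)
          = ∑ i ∈ Finset.range m, (c i - c (i+1)) * ψ (i+1) := by
        have habel := abel_sum c ψ m
        have hψ0 : ψ 0 = 0 := by simp only [hψ_def, ht0, hφx]
        have hψm : ψ (m+1) = 0 := by
          have : t (m+1) = y := htn
          simp only [hψ_def, this, hφy]
        rw [hn, habel, hψ0, hψm]
        ring
      have hcd : ∀ i : ℕ, i + 2 ≤ n → |c i - c (i+1)| ≤ 2 * oscI f (t i) (t (i+2)) := by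
        intro i hi
        have h1 : t i + h = t (i+1) := by linarith [htdiff i]
        have h2 : t i + 2*h = t (i+2) := by linarith [htdiff i, htdiff (i+1)]
        have hmd := mean_diff_le f (t i) h hh (by rw [h2]; exact hIccsub i (i+2) hi)
        rw [h1, h2] at hmd
        exact hmd
      have hAbound : ∑ i ∈ Finset.range m, (c i - c (i+1)) * ψ (i+1) ≤ 4 * oscI f x y := by
        have hparity : ∑ i ∈ Finset.range m, oscI f (t i) (t (i+2))
            ≤ oscI f x y + oscI f x y := by
          rw [← Finset.sum_filter_add_sum_filter_not (Finset.range m) (fun i => Even i)]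
          apply add_le_add
          · apply hgen
            · intro i hi
              simp only [Finset.mem_filter, Finset.mem_range] at hi
              omega
            · intro i hi j hj hij
              simp only [Finset.coe_filter, Set.mem_setOf_eq, Finset.mem_range] at hi hj
              rcases hi with ⟨_, hie⟩; rcases hj with ⟨_, hje⟩
              rw [Nat.even_iff] at hie hje
              omega
          · apply hgen
            · intro i hi
              simp only [Finset.mem_filter, Finset.mem_range] at hi
              omega
            · intro i hi j hj hij
              simp only [Finset.coe_filter, Set.mem_setOf_eq, Finset.mem_range] at hi hj
              rcases hi with ⟨_, hie⟩; rcases hj with ⟨_, hje⟩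
              rw [Nat.even_iff] at hie hje
              omega
        calc ∑ i ∈ Finset.range m, (c i - c (i+1)) * ψ (i+1)
            ≤ ∑ i ∈ Finset.range m, |c i - c (i+1)| := by
              apply Finset.sum_le_sum
              intro i _
              calc (c i - c (i+1)) * ψ (i+1) ≤ |(c i - c (i+1)) * ψ (i+1)| := le_abs_self _
                _ = |c i - c (i+1)| * |ψ (i+1)| := abs_mul _ _
                _ ≤ |c i - c (i+1)| * 1 :=
                    mul_le_mul_of_nonneg_left (hφ4 _) (abs_nonneg _)
                _ = |c i - c (i+1)| := mul_one _
          _ ≤ ∑ i ∈ Finset.range m, 2 * oscI f (t i) (t (i+2)) := by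
              apply Finset.sum_le_sum
              intro i hi
              rw [Finset.mem_range] at hi
              exact hcd i (by omega)
          _ = 2 * ∑ i ∈ Finset.range m, oscI f (t i) (t (i+2)) := by
              rw [Finset.mul_sum]
          _ ≤ 2 * (oscI f x y + oscI f x y) :=
              mul_le_mul_of_nonneg_left hparity (by norm_num)
          _ = 4 * oscI f x y := by ring
      calc (∫ u in x..y, f u * deriv φ u)
          = ∑ i ∈ Finset.range n, ∫ u in t i..t (i+1), f u * deriv φ u := hsplit
        _ ≤ ∑ i ∈ Finset.range n, (c i * (ψ (i+1) - ψ i) + M * (h * oscI f (t i) (t (i+1)))) :=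
            Finset.sum_le_sum hpiece
        _ = (∑ i ∈ Finset.range n, c i * (ψ (i+1) - ψ i))
            + M * h * ∑ i ∈ Finset.range n, oscI f (t i) (t (i+1)) := by
            rw [Finset.sum_add_distrib, Finset.mul_sum]
            congr 1
            refine Finset.sum_congr rfl (fun i _ => by ring)
        _ ≤ 4 * oscI f x y + M * h * oscI f x y := by
            apply add_le_add
            · rw [hA]; exact hAbound
            · exact mul_le_mul_of_nonneg_left hsum1 (by positivity)
        _ = 4 * oscI f x y + (M * (y - x) * oscI f x y) * (1 / ((m : ℝ) + 1)) := by
            rw [hh_def, hn]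
            push_cast
            ring
    have htend : Tendsto (fun m : ℕ => 4 * oscI f x y
        + (M * (y - x) * oscI f x y) * (1 / ((m : ℝ) + 1))) atTop
        (𝓝 (4 * oscI f x y + (M * (y - x) * oscI f x y) * 0)) :=
      tendsto_const_nhds.add (tendsto_one_div_add_atTop_nhds_zero_nat.const_mul _)
    have hfin := ge_of_tendsto' htend bound
    simpa using hfin
  have hμ : μ (Ioo x y) = ENNReal.ofReal (oscI f x y) := hext x y hax hxy hyb
  have hle : varD f x y ≤ 4 * μ (Set.Ioo x y) := by
    rw [varD, hμ]
    apply iSup_le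
    rintro ⟨φ, hφ1, hφ2, hφ3, hφ4⟩
    calc ENNReal.ofReal (∫ t in x..y, f t * deriv φ t)
        ≤ ENNReal.ofReal (4 * oscI f x y) :=
          ENNReal.ofReal_le_ofReal (key φ hφ1 hφ2 hφ3 hφ4)
      _ = 4 * ENNReal.ofReal (oscI f x y) := by
          rw [ENNReal.ofReal_mul (by norm_num)]
          norm_num
  refine ⟨lt_of_le_of_lt hle ?_, hle⟩
  rw [hμ]
  exact ENNReal.mul_lt_top (by norm_num) ENNReal.ofReal_lt_top
end

section
/- Let f : (a,b) → ℝ be bounded and measurable on (c,d) ⊂⊂ (a,b), with M := ‖f‖_{L^∞((c,d))}. Define h(x,m) := ∫_c^x |f(s) - m| ds on (c,d) × [-M, M]. Then h is Lipschitz, and for almost every (x,m): ∂_x h(x,m) = |f(x) - m| and ∂_m h(x,m) = |{f < m} ∩ (c,x)| - |{f > m} ∩ (c,x)|. -/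
open MeasureTheory Set Filter
open scoped ENNReal

open Metric
open scoped Topology

section Aux

lemma aux_ae_Ioo (c d : ℝ) : ∀ᵐ s : ℝ, s ∈ Set.Icc c d → s ∈ Set.Ioo c d := by
  have h : (volume : Measure ℝ) ({c, d} : Set ℝ) = 0 := by
    apply measure_union_null <;> exact Real.volume_singleton
  filter_upwards [measure_eq_zero_iff_ae_notMem.mp h] with s hs hsi
  rcases hsi with ⟨h1, h2⟩
  constructor
  · exact lt_of_le_of_ne h1 (fun h => hs (by simp [h.symm]))
  · exact lt_of_le_of_ne h2 (fun h => hs (by simp [h]))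

lemma aux_intInt (c d M : ℝ) (f : ℝ → ℝ) (hmeas : Measurable f)
    (hbdd : ∀ x ∈ Set.Ioo c d, |f x| ≤ M) (m : ℝ) (hm : |m| ≤ M)
    {u v : ℝ} (hu : u ∈ Set.Icc c d) (hv : v ∈ Set.Icc c d) :
    IntervalIntegrable (fun s => |f s - m|) volume u v := by
  rw [intervalIntegrable_iff]
  have hsub : Set.uIoc u v ⊆ Set.Icc c d :=
    Set.uIoc_subset_uIcc.trans (Set.uIcc_subset_Icc hu hv)
  have hme : AEStronglyMeasurable (fun s => |f s - m|) (volume.restrict (Set.uIoc u v)) :=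
    ((hmeas.sub measurable_const).abs).aestronglyMeasurable
  haveI : IsFiniteMeasure (volume.restrict (Set.uIoc u v)) :=
    ⟨by rw [Measure.restrict_apply_univ]; exact (measure_mono hsub).trans_lt (by simp)⟩
  refine Integrable.mono' (g := fun _ => 2 * M) ?_ hme ?_
  · exact integrable_const _
  · rw [ae_restrict_iff' measurableSet_uIoc]
    filter_upwards [aux_ae_Ioo c d] with s hs hsuv
    have hs' := hs (hsub hsuv)
    have := hbdd s hs'
    have : |f s - m| ≤ |f s| + |m| := abs_sub _ _
    calc ‖|f s - m|‖ = |f s - m| := by rw [Real.norm_eq_abs, abs_abs]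
      _ ≤ |f s| + |m| := abs_sub _ _
      _ ≤ M + M := add_le_add (hbdd s hs') hm
      _ = 2 * M := by ring

lemma aux_lip (c d M : ℝ) (hcd : c < d) (hM : 0 ≤ M)
    (f : ℝ → ℝ) (hmeas : Measurable f) (hbdd : ∀ x ∈ Set.Ioo c d, |f x| ≤ M)
    (hII : ∀ (m : ℝ), |m| ≤ M → ∀ {u v : ℝ}, u ∈ Set.Icc c d → v ∈ Set.Icc c d →
      IntervalIntegrable (fun s => |f s - m|) volume u v) :
    ∃ K : NNReal, LipschitzOnWith K
        (fun p : ℝ × ℝ => ∫ s in c..p.1, |f s - p.2|)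
        (Set.Ioo c d ×ˢ Set.Icc (-M) M) := by
  refine ⟨(2 * M + (d - c)).toNNReal, ?_⟩
  have hK : ((2 * M + (d - c)).toNNReal : ℝ) = 2 * M + (d - c) :=
    Real.coe_toNNReal _ (by linarith)
  rw [lipschitzOnWith_iff_dist_le_mul]
  rintro ⟨x, m⟩ ⟨hx, hm⟩ ⟨y, n⟩ ⟨hy, hn⟩
  simp only at hx hm hy hn ⊢
  have hmM : |m| ≤ M := abs_le.mpr ⟨hm.1, hm.2⟩
  have hnM : |n| ≤ M := abs_le.mpr ⟨hn.1, hn.2⟩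
  have hxI : x ∈ Set.Icc c d := ⟨hx.1.le, hx.2.le⟩
  have hyI : y ∈ Set.Icc c d := ⟨hy.1.le, hy.2.le⟩
  have hcI : c ∈ Set.Icc c d := ⟨le_refl c, hcd.le⟩
  have key1 : abs ((∫ s in c..x, |f s - m|) - ∫ s in c..y, |f s - m|) ≤ 2 * M * |x - y| := by
    have heq := intervalIntegral.integral_interval_sub_left (hII m hmM hcI hxI) (hII m hmM hcI hyI)
    rw [heq]
    have hb : ∀ s ∈ Set.uIoc y x, ‖|f s - m|‖ ≤ 2 * M := by
      intro s hs
      have hs' : s ∈ Set.Ioo c d := by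
        have hsub : Set.uIoc y x ⊆ Set.Ioo c d := by
          rw [Set.uIoc_eq_union]
          rintro t (ht | ht)
          · exact ⟨hy.1.trans ht.1, ht.2.trans_lt hx.2⟩
          · exact ⟨hx.1.trans ht.1, ht.2.trans_lt hy.2⟩
        exact hsub hs
      calc ‖|f s - m|‖ = |f s - m| := by rw [Real.norm_eq_abs, abs_abs]
        _ ≤ |f s| + |m| := abs_sub _ _
        _ ≤ M + M := add_le_add (hbdd s hs') hmM
        _ = 2 * M := by ring
    have h2 := intervalIntegral.norm_integral_le_of_norm_le_const hb
    rwa [Real.norm_eq_abs] at h2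
  have key2 : abs ((∫ s in c..y, |f s - m|) - ∫ s in c..y, |f s - n|) ≤ (d - c) * |m - n| := by
    rw [← intervalIntegral.integral_sub (hII m hmM hcI hyI) (hII n hnM hcI hyI)]
    have hb : ∀ s ∈ Set.uIoc c y, ‖|f s - m| - |f s - n|‖ ≤ |m - n| := by
      intro s _
      rw [Real.norm_eq_abs]
      calc abs (|f s - m| - |f s - n|) ≤ |(f s - m) - (f s - n)| := abs_abs_sub_abs_le_abs_sub _ _
        _ = |n - m| := by ring_nf
        _ = |m - n| := abs_sub_comm _ _
    have h2 := intervalIntegral.norm_integral_le_of_norm_le_const hb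
    rw [Real.norm_eq_abs] at h2
    refine h2.trans ?_
    have hyc : |y - c| ≤ d - c := by
      rw [abs_of_nonneg (by linarith [hy.1])]; linarith [hy.2]
    calc |m - n| * |y - c| ≤ |m - n| * (d - c) :=
          mul_le_mul_of_nonneg_left hyc (abs_nonneg _)
      _ = (d - c) * |m - n| := mul_comm _ _
  rw [Real.dist_eq, hK]
  have hd1 : |x - y| ≤ dist (x, m) (y, n) := by
    rw [Prod.dist_eq]; exact le_max_of_le_left (le_of_eq (Real.dist_eq x y).symm)
  have hd2 : |m - n| ≤ dist (x, m) (y, n) := by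
    rw [Prod.dist_eq]; exact le_max_of_le_right (le_of_eq (Real.dist_eq m n).symm)
  have hdnn : (0:ℝ) ≤ dist (x, m) (y, n) := dist_nonneg
  calc abs ((∫ s in c..x, |f s - m|) - ∫ s in c..y, |f s - n|)
      ≤ abs ((∫ s in c..x, |f s - m|) - ∫ s in c..y, |f s - m|)
        + abs ((∫ s in c..y, |f s - m|) - ∫ s in c..y, |f s - n|) := abs_sub_le _ _ _
    _ ≤ 2 * M * |x - y| + (d - c) * |m - n| := add_le_add key1 key2
    _ ≤ 2 * M * dist (x, m) (y, n) + (d - c) * dist (x, m) (y, n) := by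
        apply add_le_add
        · exact mul_le_mul_of_nonneg_left hd1 (by linarith)
        · exact mul_le_mul_of_nonneg_left hd2 (by linarith)
    _ = (2 * M + (d - c)) * dist (x, m) (y, n) := by ring

lemma aux_xderiv (c d M : ℝ) (hcd : c < d) (hM : 0 ≤ M)
    (f : ℝ → ℝ) (hmeas : Measurable f) (hbdd : ∀ x ∈ Set.Ioo c d, |f x| ≤ M)
    (hII : ∀ (m : ℝ), |m| ≤ M → ∀ {u v : ℝ}, u ∈ Set.Icc c d → v ∈ Set.Icc c d →
      IntervalIntegrable (fun s => |f s - m|) volume u v)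
    (g0 : ℝ → ℝ) (hg0 : g0 = (Set.Ioo c d).indicator f)
    (hg0int : Integrable g0)
    {x m : ℝ} (hx : x ∈ Set.Ioo c d) (hm : |m| ≤ M)
    (hLeb : Filter.Tendsto (fun y : ℝ => ⨍ t in Metric.closedBall x |y - x|, ‖g0 t - g0 x‖)
      (𝓝[≠] x) (𝓝 0)) :
    HasDerivAt (fun y => ∫ s in c..y, |f s - m|) (|f x - m|) x := by
  rw [hasDerivAt_iff_tendsto_slope]
  set L := |f x - m| with hL
  set h : ℝ → ℝ := fun y => ∫ s in c..y, |f s - m| with hh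
  rw [tendsto_iff_dist_tendsto_zero]
  have hbig : Filter.Tendsto (fun y : ℝ => 2 * ⨍ t in Metric.closedBall x |y - x|, ‖g0 t - g0 x‖)
      (𝓝[≠] x) (𝓝 0) := by simpa using hLeb.const_mul 2
  apply squeeze_zero' (Filter.Eventually.of_forall fun y => dist_nonneg) ?_ hbig
  have hev : ∀ᶠ y in 𝓝[≠] x, y ∈ Set.Ioo c d ∧ y ≠ x := by
    apply Filter.Eventually.and
    · exact eventually_nhdsWithin_of_eventually_nhds (isOpen_Ioo.mem_nhds hx)
    · exact eventually_mem_nhdsWithin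
  filter_upwards [hev] with y ⟨hy, hyx⟩
  set r := |y - x| with hr
  have hrpos : 0 < r := abs_pos.mpr (sub_ne_zero.mpr hyx)
  have hxI : x ∈ Set.Icc c d := ⟨hx.1.le, hx.2.le⟩
  have hyI : y ∈ Set.Icc c d := ⟨hy.1.le, hy.2.le⟩
  have hcI : c ∈ Set.Icc c d := ⟨le_refl c, hcd.le⟩
  -- the difference of integrals
  have hdiff : h y - h x = ∫ s in x..y, |f s - m| :=
    intervalIntegral.integral_interval_sub_left (hII m hm hcI hyI) (hII m hm hcI hxI)
  have hIIxy := hII m hm hxI hyI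
  have hsplit : (∫ s in x..y, |f s - m|) - L * (y - x) = ∫ s in x..y, (|f s - m| - L) := by
    rw [intervalIntegral.integral_sub hIIxy intervalIntegrable_const,
      intervalIntegral.integral_const]
    simp [smul_eq_mul]
    ring
  -- subset facts
  have hsub1 : Set.uIoc x y ⊆ Set.Ioo c d := by
    rw [Set.uIoc_eq_union]
    rintro t (ht | ht)
    · exact ⟨hx.1.trans ht.1, ht.2.trans_lt hy.2⟩
    · exact ⟨hy.1.trans ht.1, ht.2.trans_lt hx.2⟩
  have hsub2 : Set.uIoc x y ⊆ Metric.closedBall x r := by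
    intro t ht
    rw [Metric.mem_closedBall, Real.dist_eq]
    rcases le_total x y with hle | hle
    · rw [Set.uIoc_of_le hle] at ht
      rw [abs_of_nonneg (by linarith [ht.1.le]), hr, abs_of_nonneg (by linarith)]
      linarith [ht.2]
    · rw [Set.uIoc_of_ge hle] at ht
      rw [abs_of_nonpos (by linarith [ht.2]), hr, abs_of_nonpos (by linarith)]
      linarith [ht.1]
  -- pointwise bound on uIoc
  have hpt : ∀ t ∈ Set.uIoc x y, ‖|f t - m| - L‖ ≤ ‖g0 t - g0 x‖ := by
    intro t ht
    have htI := hsub1 ht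
    rw [hg0, Set.indicator_of_mem htI, Set.indicator_of_mem hx, Real.norm_eq_abs,
      Real.norm_eq_abs, hL]
    calc |(|f t - m| - |f x - m|)| ≤ |(f t - m) - (f x - m)| := abs_abs_sub_abs_le_abs_sub _ _
      _ = |f t - f x| := by ring_nf
  -- integrability facts
  have hint1 : IntegrableOn (fun t => ‖|f t - m| - L‖) (Set.uIoc x y) volume := by
    rw [← intervalIntegrable_iff]
    exact (hIIxy.sub intervalIntegrable_const).norm
  have hint2 : IntegrableOn (fun t => ‖g0 t - g0 x‖) (Metric.closedBall x r) volume := by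
    apply Integrable.norm
    apply Integrable.sub hg0int.integrableOn
    exact integrableOn_const measure_closedBall_lt_top.ne
  -- main estimate
  have hnorm : |∫ s in x..y, (|f s - m| - L)| ≤ ∫ t in Metric.closedBall x r, ‖g0 t - g0 x‖ := by
    calc |∫ s in x..y, (|f s - m| - L)| ≤ ∫ t in Set.uIoc x y, ‖|f t - m| - L‖ := by
          rw [← Real.norm_eq_abs]
          exact intervalIntegral.norm_integral_le_integral_norm_uIoc
      _ ≤ ∫ t in Set.uIoc x y, ‖g0 t - g0 x‖ :=
          setIntegral_mono_on hint1 (hint2.mono_set hsub2) measurableSet_uIoc hpt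
      _ ≤ ∫ t in Metric.closedBall x r, ‖g0 t - g0 x‖ := by
          apply setIntegral_mono_set hint2
          · exact Filter.Eventually.of_forall fun t => norm_nonneg _
          · exact HasSubset.Subset.eventuallyLE hsub2
  have havg : (⨍ t in Metric.closedBall x r, ‖g0 t - g0 x‖)
      = (2 * r)⁻¹ * ∫ t in Metric.closedBall x r, ‖g0 t - g0 x‖ := by
    rw [setAverage_eq, measureReal_def, Real.volume_closedBall, ENNReal.toReal_ofReal (by linarith), smul_eq_mul]
  have hyx' : y - x ≠ 0 := sub_ne_zero.mpr hyx
  have hslope : slope h x y - L = (∫ s in x..y, (|f s - m| - L)) / (y - x) := by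
    rw [slope_def_field, hdiff, ← hsplit]
    field_simp
  calc dist (slope h x y) L = |∫ s in x..y, (|f s - m| - L)| / r := by
        rw [Real.dist_eq, hslope, abs_div, hr]
    _ ≤ (∫ t in Metric.closedBall x r, ‖g0 t - g0 x‖) / r := by
        gcongr
    _ = 2 * ⨍ t in Metric.closedBall x r, ‖g0 t - g0 x‖ := by
        rw [havg]
        field_simp

lemma aux_g0int (c d M : ℝ) (hcd : c < d) (hM : 0 ≤ M)
    (f : ℝ → ℝ) (hmeas : Measurable f) (hbdd : ∀ x ∈ Set.Ioo c d, |f x| ≤ M) :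
    Integrable ((Set.Ioo c d).indicator f) := by
  rw [integrable_indicator_iff measurableSet_Ioo]
  haveI : IsFiniteMeasure (volume.restrict (Set.Ioo c d)) :=
    ⟨by rw [Measure.restrict_apply_univ]; exact (measure_Ioo_lt_top)⟩
  refine Integrable.mono' (g := fun _ => M) (integrable_const _)
    hmeas.aestronglyMeasurable.restrict ?_
  rw [ae_restrict_iff' measurableSet_Ioo]
  exact Filter.Eventually.of_forall fun s hs => by
    rw [Real.norm_eq_abs]; exact hbdd s hs


lemma aux_leb (g0 : ℝ → ℝ) (hg0int : Integrable g0) :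
    ∀ᵐ x ∂(volume : Measure ℝ), Filter.Tendsto
      (fun y : ℝ => ⨍ t in Metric.closedBall x |y - x|, ‖g0 t - g0 x‖) (𝓝[≠] x) (𝓝 0) := by
  filter_upwards [IsUnifLocDoublingMeasure.ae_tendsto_average_norm_sub volume
    hg0int.locallyIntegrable 1] with x hx
  refine hx (fun _ => x) (fun y => |y - x|) ?_ ?_
  · rw [tendsto_nhdsWithin_iff]
    constructor
    · have : Filter.Tendsto (fun y : ℝ => |y - x|) (𝓝 x) (𝓝 |x - x|) :=
        ((continuous_id.sub continuous_const).abs.tendsto x)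
      simpa using this.mono_left nhdsWithin_le_nhds
    · filter_upwards [eventually_mem_nhdsWithin] with y hy
      exact abs_pos.mpr (sub_ne_zero.mpr hy)
  · exact Filter.Eventually.of_forall fun y => Metric.mem_closedBall_self (by positivity)

lemma aux_mderiv (c d M : ℝ) (hcd : c < d) (hM : 0 ≤ M)
    (f : ℝ → ℝ) (hmeas : Measurable f) (hbdd : ∀ x ∈ Set.Ioo c d, |f x| ≤ M)
    (hII : ∀ (m : ℝ), |m| ≤ M → ∀ {u v : ℝ}, u ∈ Set.Icc c d → v ∈ Set.Icc c d →
      IntervalIntegrable (fun s => |f s - m|) volume u v)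
    {x m : ℝ} (hx : x ∈ Set.Ioo c d) (hm : |m| ≤ M)
    (hlev : volume {s ∈ Set.Ioo c d | f s = m} = 0) :
    HasDerivAt (fun n => ∫ s in c..x, |f s - n|)
      ((volume {t ∈ Set.Ioo c x | f t < m}).toReal
        - (volume {t ∈ Set.Ioo c x | m < f t}).toReal) m := by
  have hcx : c < x := hx.1
  have hxI : x ∈ Set.Icc c d := ⟨hx.1.le, hx.2.le⟩
  have hcI : c ∈ Set.Icc c d := ⟨le_refl c, hcd.le⟩
  set μ : Measure ℝ := volume.restrict (Set.Ioc c x) with hμ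
  haveI : IsFiniteMeasure μ :=
    ⟨by rw [hμ, Measure.restrict_apply_univ]; exact measure_Ioc_lt_top⟩
  have hIoc_sub : Set.Ioc c x ⊆ Set.Ioo c d := fun t ht => ⟨ht.1, ht.2.trans_lt hx.2⟩
  set F' : ℝ → ℝ := fun s => if f s < m then 1 else -1 with hF'
  -- measurability
  have hAmeas : MeasurableSet {s : ℝ | f s < m} := measurableSet_lt hmeas measurable_const
  have hF'meas : AEStronglyMeasurable F' μ :=
    (Measurable.ite hAmeas measurable_const measurable_const).aestronglyMeasurable
  -- a.e. f s ≠ m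
  have hne : ∀ᵐ s ∂μ, f s ≠ m := by
    rw [hμ, ae_restrict_iff' measurableSet_Ioc]
    refine measure_mono_null (fun s hs => ?_) hlev
    simp only [Set.mem_compl_iff, Set.mem_setOf_eq, Classical.not_imp, not_not] at hs
    exact ⟨hIoc_sub hs.1, hs.2⟩
  -- the dominated-convergence differentiation lemma
  have key := hasDerivAt_integral_of_dominated_loc_of_lip
    (F := fun n s => |f s - n|) (F' := F') (x₀ := m) (bound := fun _ => 1)
    (μ := μ) (s := Metric.ball m 1) (Metric.ball_mem_nhds m one_pos)
    (Filter.Eventually.of_forall fun n =>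
      ((hmeas.sub measurable_const).abs).aestronglyMeasurable)
    ((intervalIntegrable_iff_integrableOn_Ioc_of_le hcx.le).mp (hII m hm hcI hxI))
    hF'meas
    (Filter.Eventually.of_forall fun s => by
      have hl : LipschitzWith 1 (fun n : ℝ => |f s - n|) := by
        apply LipschitzWith.of_dist_le_mul
        intro n n'
        rw [Real.dist_eq, Real.dist_eq, NNReal.coe_one, one_mul]
        calc |(|f s - n| - |f s - n'|)| ≤ |(f s - n) - (f s - n')| :=
              abs_abs_sub_abs_le_abs_sub _ _
          _ = |n' - n| := by ring_nf
          _ = |n - n'| := abs_sub_comm _ _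
      simpa using hl.lipschitzOnWith)
    (integrable_const _)
    (by
      filter_upwards [hne] with s hs
      rcases lt_or_gt_of_ne hs with h1 | h1
      · -- f s < m : derivative 1
        have hev : (fun n : ℝ => |f s - n|) =ᶠ[𝓝 m] (fun n => n - f s) := by
          filter_upwards [eventually_gt_nhds h1] with n hn
          rw [abs_of_neg (by linarith)]; ring
        have hd : HasDerivAt (fun n : ℝ => n - f s) 1 m := (hasDerivAt_id m).sub_const (f s)
        have : HasDerivAt (fun n : ℝ => |f s - n|) 1 m := hd.congr_of_eventuallyEq hev
        simpa [hF', if_pos h1] using this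
      · -- m < f s : derivative -1
        have hev : (fun n : ℝ => |f s - n|) =ᶠ[𝓝 m] (fun n => f s - n) := by
          filter_upwards [eventually_lt_nhds h1] with n hn
          rw [abs_of_pos (by linarith)]
        have hd : HasDerivAt (fun n : ℝ => f s - n) (-1) m := by
          simpa using (hasDerivAt_id m).const_sub (f s)
        have : HasDerivAt (fun n : ℝ => |f s - n|) (-1) m := hd.congr_of_eventuallyEq hev
        simpa [hF', if_neg (not_lt.mpr h1.le)] using this)
  obtain ⟨hF'int, hder⟩ := key
  -- identify the function
  have hfun : (fun n => ∫ s in c..x, |f s - n|) = (fun n => ∫ s, |f s - n| ∂μ) := by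
    funext n
    rw [intervalIntegral.integral_of_le hcx.le]
  -- compute ∫ F' ∂μ
  have hsplit : ∫ s, F' s ∂μ
      = (μ {s : ℝ | f s < m}).toReal - (μ {s : ℝ | f s < m}ᶜ).toReal := by
    rw [← integral_add_compl hAmeas hF'int]
    have h1 : ∫ s in {s : ℝ | f s < m}, F' s ∂μ = (μ {s : ℝ | f s < m}).toReal := by
      rw [setIntegral_congr_fun hAmeas
        (show Set.EqOn F' (fun _ => (1:ℝ)) {s : ℝ | f s < m} from fun s hs => if_pos hs)]
      simp [setIntegral_const, measureReal_def]
    have h2 : ∫ s in {s : ℝ | f s < m}ᶜ, F' s ∂μ = -(μ {s : ℝ | f s < m}ᶜ).toReal := by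
      rw [setIntegral_congr_fun hAmeas.compl
        (show Set.EqOn F' (fun _ => (-1:ℝ)) {s : ℝ | f s < m}ᶜ from fun s hs => if_neg hs)]
      simp [setIntegral_const, measureReal_def]
    rw [h1, h2]
    ring
  -- identify the measures
  have hm1 : μ {s : ℝ | f s < m} = volume {t ∈ Set.Ioo c x | f t < m} := by
    rw [hμ, Measure.restrict_apply hAmeas]
    apply le_antisymm
    · calc volume ({s : ℝ | f s < m} ∩ Set.Ioc c x)
          ≤ volume ({t ∈ Set.Ioo c x | f t < m} ∪ {x}) := by
            apply measure_mono
            rintro t ⟨ht1, ht2, ht3⟩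
            rcases lt_or_eq_of_le ht3 with h | h
            · exact Or.inl ⟨⟨ht2, h⟩, ht1⟩
            · exact Or.inr (by simp [h])
        _ ≤ volume {t ∈ Set.Ioo c x | f t < m} + volume ({x} : Set ℝ) := measure_union_le _ _
        _ = volume {t ∈ Set.Ioo c x | f t < m} := by simp
    · apply measure_mono
      rintro t ⟨⟨ht1, ht2⟩, ht3⟩
      exact ⟨ht3, ht1, ht2.le⟩
  have hm2 : μ ({s : ℝ | f s < m}ᶜ) = volume {t ∈ Set.Ioo c x | m < f t} := by
    rw [hμ, Measure.restrict_apply hAmeas.compl]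
    apply le_antisymm
    · calc volume ({s : ℝ | f s < m}ᶜ ∩ Set.Ioc c x)
          ≤ volume ({t ∈ Set.Ioo c x | m < f t} ∪ ({s ∈ Set.Ioo c d | f s = m} ∪ {x})) := by
            apply measure_mono
            rintro t ⟨ht1, ht2, ht3⟩
            simp only [Set.mem_compl_iff, Set.mem_setOf_eq, not_lt] at ht1
            rcases lt_or_eq_of_le ht1 with h | h
            · rcases lt_or_eq_of_le ht3 with h' | h'
              · exact Or.inl ⟨⟨ht2, h'⟩, h⟩
              · exact Or.inr (Or.inr (by simp [h']))
            · exact Or.inr (Or.inl ⟨hIoc_sub ⟨ht2, ht3⟩, h.symm⟩)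
        _ ≤ volume {t ∈ Set.Ioo c x | m < f t}
              + volume ({s ∈ Set.Ioo c d | f s = m} ∪ {x}) := measure_union_le _ _
        _ = volume {t ∈ Set.Ioo c x | m < f t} := by
            rw [measure_union_null_iff.mpr ⟨hlev, measure_singleton x⟩, add_zero]
    · apply measure_mono
      rintro t ⟨⟨ht1, ht2⟩, ht3⟩
      exact ⟨not_lt.mpr ht3.le, ht1, ht2.le⟩
  rw [hfun]
  rw [hsplit, hm1, hm2] at hder
  exact hder

lemma aux_ae_prod_fst {μ ν : Measure ℝ} [SFinite ν] {p : ℝ → Prop}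
    (h : ∀ᵐ x ∂μ, p x) : ∀ᵐ q ∂μ.prod ν, p q.1 := by
  rw [ae_iff] at h ⊢
  obtain ⟨N, hsub, hNm, hN0⟩ := exists_measurable_superset_of_null h
  refine measure_mono_null (t := N ×ˢ Set.univ) (fun q hq => ?_) ?_
  · exact Set.mem_prod.mpr ⟨hsub hq, Set.mem_univ _⟩
  · rw [Measure.prod_prod, hN0, zero_mul]

lemma aux_ae_prod_snd {μ ν : Measure ℝ} [SFinite ν] {p : ℝ → Prop}
    (h : ∀ᵐ x ∂ν, p x) : ∀ᵐ q ∂μ.prod ν, p q.2 := by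
  rw [ae_iff] at h ⊢
  obtain ⟨N, hsub, hNm, hN0⟩ := exists_measurable_superset_of_null h
  refine measure_mono_null (t := Set.univ ×ˢ N) (fun q hq => ?_) ?_
  · exact Set.mem_prod.mpr ⟨Set.mem_univ _, hsub hq⟩
  · rw [Measure.prod_prod, hN0, mul_zero]

lemma aux_level (c d M : ℝ) (f : ℝ → ℝ) (hmeas : Measurable f) :
    ∀ᵐ m ∂(volume.restrict (Set.Icc (-M) M)), volume {s ∈ Set.Ioo c d | f s = m} = 0 := by
  apply ae_restrict_of_ae
  have hcnt : Set.Countable {t : ℝ | 0 < (volume.restrict (Set.Ioo c d)) {a | f a = t}} :=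
    Measure.countable_meas_level_set_pos hmeas
  have h0 : volume {t : ℝ | 0 < (volume.restrict (Set.Ioo c d)) {a | f a = t}} = 0 :=
    Set.Countable.measure_zero hcnt _
  filter_upwards [measure_eq_zero_iff_ae_notMem.mp h0] with m hm
  simp only [Set.mem_setOf_eq, not_lt, le_zero_iff] at hm
  rw [Measure.restrict_apply (show MeasurableSet {a : ℝ | f a = m} from
    hmeas (measurableSet_singleton m))] at hm
  convert hm using 2
  ext s
  simp only [Set.mem_setOf_eq, Set.mem_inter_iff, Set.mem_preimage, Set.mem_singleton_iff]
  tauto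

end Aux

/-- For `f` bounded measurable on `(c, d)` with `|f| ≤ M`, the function
`h(x, m) = ∫_c^x |f(s) - m| ds` is Lipschitz on `(c,d) × [-M, M]` and, for a.e. `(x, m)`,
`∂ₓh = |f(x) - m|` and `∂ₘh = |{f < m} ∩ (c,x)| - |{f > m} ∩ (c,x)|`. -/
theorem h_lipschitz_and_partials (c d M : ℝ) (hcd : c < d) (hM : 0 ≤ M)
    (f : ℝ → ℝ) (hmeas : Measurable f) (hbdd : ∀ x ∈ Set.Ioo c d, |f x| ≤ M) :
    (∃ K : NNReal, LipschitzOnWith K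
        (fun p : ℝ × ℝ => ∫ s in c..p.1, |f s - p.2|)
        (Set.Ioo c d ×ˢ Set.Icc (-M) M)) ∧
    (∀ᵐ p ∂((volume.restrict (Set.Ioo c d)).prod (volume.restrict (Set.Icc (-M) M))),
      HasDerivAt (fun x => ∫ s in c..x, |f s - p.2|) (|f p.1 - p.2|) p.1 ∧
      HasDerivAt (fun m => ∫ s in c..p.1, |f s - m|)
        ((volume {t ∈ Set.Ioo c p.1 | f t < p.2}).toReal
          - (volume {t ∈ Set.Ioo c p.1 | p.2 < f t}).toReal) p.2) := by
  have hII : ∀ (m : ℝ), |m| ≤ M → ∀ {u v : ℝ}, u ∈ Set.Icc c d → v ∈ Set.Icc c d →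
      IntervalIntegrable (fun s => |f s - m|) volume u v :=
    fun m hm => aux_intInt c d M f hmeas hbdd m hm
  set g0 : ℝ → ℝ := (Set.Ioo c d).indicator f with hg0
  have hg0int : Integrable g0 := aux_g0int c d M hcd hM f hmeas hbdd
  refine ⟨aux_lip c d M hcd hM f hmeas hbdd hII, ?_⟩
  have A1 : ∀ᵐ q ∂((volume.restrict (Set.Ioo c d)).prod (volume.restrict (Set.Icc (-M) M))),
      q.1 ∈ Set.Ioo c d := aux_ae_prod_fst (ae_restrict_mem measurableSet_Ioo)
  have A2 : ∀ᵐ q ∂((volume.restrict (Set.Ioo c d)).prod (volume.restrict (Set.Icc (-M) M))),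
      Filter.Tendsto (fun y : ℝ => ⨍ t in Metric.closedBall q.1 |y - q.1|, ‖g0 t - g0 q.1‖)
        (nhdsWithin q.1 {q.1}ᶜ) (nhds 0) :=
    aux_ae_prod_fst (ae_restrict_of_ae (aux_leb g0 hg0int))
  have B1 : ∀ᵐ q ∂((volume.restrict (Set.Ioo c d)).prod (volume.restrict (Set.Icc (-M) M))),
      q.2 ∈ Set.Icc (-M) M := aux_ae_prod_snd (ae_restrict_mem measurableSet_Icc)
  have B2 : ∀ᵐ q ∂((volume.restrict (Set.Ioo c d)).prod (volume.restrict (Set.Icc (-M) M))),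
      volume {s ∈ Set.Ioo c d | f s = q.2} = 0 :=
    aux_ae_prod_snd (aux_level c d M f hmeas)
  filter_upwards [A1, A2, B1, B2] with p h1 h2 h3 h4
  have hmM : |p.2| ≤ M := abs_le.mpr ⟨h3.1, h3.2⟩
  exact ⟨aux_xderiv c d M hcd hM f hmeas hbdd hII g0 hg0 hg0int h1 hmM h2,
    aux_mderiv c d M hcd hM f hmeas hbdd hII h1 hmM h4⟩
end

section
/- Let f : (a,b) → ℝ be locally Lipschitz and let x₀ be a Lebesgue continuity point of f'. Then lim_{r→0} (1/(2r))·osc(f, (x₀-r, x₀+r)) = (1/4)|f'(x₀)|. -/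
open MeasureTheory Set Filter
open scoped ENNReal

open intervalIntegral

/-- Half of the FTC for Lipschitz functions with a.e. derivative: `∫ g ≤ f v - f u`. -/
lemma ftc_half (u v : ℝ) (huv : u ≤ v) (K : NNReal) (f g : ℝ → ℝ)
    (hf : LipschitzOnWith K f (Set.Icc u v))
    (hg : ∀ᵐ x, x ∈ Set.Ioo u v → HasDerivAt f (g x) x)
    (hgm : AEStronglyMeasurable g (volume.restrict (Set.Ioc u v)))
    (hgb : ∀ᵐ x ∂(volume.restrict (Set.Ioc u v)), |g x| ≤ K) :
    ∫ x in Set.Ioc u v, g x ≤ f v - f u := by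
  set c : ℝ → ℝ := fun t => max u (min t v) with hc
  have hcmem : ∀ t, c t ∈ Set.Icc u v := fun t =>
    ⟨le_max_left _ _, max_le huv (min_le_right _ _)⟩
  have hcu : c u = u := by simp [hc, min_eq_left huv]
  have hcv : c v = v := by simp [hc, max_eq_right huv]
  have hclip : ∀ s t, |c t - c s| ≤ |t - s| := by
    intro s t
    calc |c t - c s| ≤ |min t v - min s v| := by
          simpa [max_comm] using abs_max_sub_max_le_abs (min t v) (min s v) u
      _ ≤ max |t - s| |v - v| := abs_min_sub_min_le_max _ _ _ _
      _ = |t - s| := by simp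
  have hcmono : Monotone c := fun s t hst =>
    max_le_max le_rfl (min_le_min hst le_rfl)
  have hccont : Continuous c := continuous_const.max (continuous_id.min continuous_const)
  have hflip : ∀ s t, |f (c t) - f (c s)| ≤ K * |t - s| := by
    intro s t
    have h1 := hf.dist_le_mul (c t) (hcmem t) (c s) (hcmem s)
    rw [Real.dist_eq, Real.dist_eq] at h1
    exact h1.trans (mul_le_mul_of_nonneg_left (hclip s t) K.coe_nonneg)
  set φ : ℝ → ℝ := fun t => f (c t) + K * t with hφdef
  have hφmono : Monotone φ := by
    intro s t hst
    have h1 := (abs_le.1 (hflip s t)).1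
    rw [abs_of_nonneg (sub_nonneg.2 hst)] at h1
    simp only [hφdef]
    nlinarith
  have hφcont : Continuous φ := by
    refine ((hf.continuousOn.comp_continuous hccont hcmem).add (by fun_prop))
  set S : StieltjesFunction ℝ := ⟨φ, hφmono, fun x => (hφcont.continuousAt).continuousWithinAt⟩
    with hS
  set d : ℝ → ℝ := fun x => (S.measure.rnDeriv volume x).toReal with hd
  have hder : ∀ᵐ x, HasDerivAt φ (d x) x := S.ae_hasDerivAt
  have heq : ∀ᵐ x, x ∈ Set.Ioo u v → d x = g x + K := by
    filter_upwards [hder, hg] with x h1 h2 hx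
    have hnb : Set.Ioo u v ∈ nhds x := Ioo_mem_nhds hx.1 hx.2
    have hxx : HasDerivAt φ (g x + K) x := by
      have hbase : HasDerivAt (fun t => f t + K * t) (g x + K) x :=
        (h2 hx).add ((hasDerivAt_id x).const_mul (K : ℝ) |>.congr_deriv (by ring))
      refine hbase.congr_of_eventuallyEq ?_
      filter_upwards [hnb] with t ht
      have : c t = t := by
        simp [hc, min_eq_left ht.2.le, max_eq_right ht.1.le]
      simp [hφdef, this]
    exact h1.unique hxx
  have hnonneg : 0 ≤ᶠ[ae (volume.restrict (Set.Ioc u v))] fun x => g x + K := by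
    filter_upwards [hgb] with x hx
    have := (abs_le.1 hx).1
    simp only [Pi.zero_apply]; linarith
  have hmeas : AEStronglyMeasurable (fun x => g x + K) (volume.restrict (Set.Ioc u v)) :=
    hgm.add aestronglyMeasurable_const
  have key : ∫ x in Set.Ioc u v, (g x + K) ≤ φ v - φ u := by
    have e1 : ∫ x in Set.Ioc u v, (g x + K) =
        (∫⁻ x in Set.Ioc u v, ENNReal.ofReal (g x + K)).toReal :=
      integral_eq_lintegral_of_nonneg_ae hnonneg hmeas
    have e2 : ∫⁻ x in Set.Ioc u v, ENNReal.ofReal (g x + K) =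
        ∫⁻ x in Set.Ioc u v, S.measure.rnDeriv volume x := by
      apply lintegral_congr_ae
      have h3 : ∀ᵐ x ∂(volume.restrict (Set.Ioc u v)), x ∈ Set.Ioo u v := by
        have hv : ∀ᵐ x ∂(volume.restrict (Set.Ioc u v)), x ≠ v := by
          refine ae_restrict_of_ae ?_
          have : volume ({v} : Set ℝ) = 0 := Real.volume_singleton
          exact (ae_iff.2 (by simpa using this))
        filter_upwards [ae_restrict_mem measurableSet_Ioc, hv] with x hx hxv
        exact ⟨hx.1, lt_of_le_of_ne hx.2 hxv⟩
      have h4 : ∀ᵐ x ∂(volume.restrict (Set.Ioc u v)), S.measure.rnDeriv volume x < ⊤ :=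
        ae_restrict_of_ae (Measure.rnDeriv_lt_top _ _)
      filter_upwards [h3, ae_restrict_of_ae heq, h4] with x hx hxeq hlt
      rw [← hxeq hx]
      simp [hd, ENNReal.ofReal_toReal hlt.ne]
    have e3 : ∫⁻ x in Set.Ioc u v, S.measure.rnDeriv volume x ≤ S.measure (Set.Ioc u v) :=
      Measure.setLIntegral_rnDeriv_le _
    have e4 : S.measure (Set.Ioc u v) = ENNReal.ofReal (φ v - φ u) := by
      exact S.measure_Ioc u v
    rw [e1]
    calc (∫⁻ x in Set.Ioc u v, ENNReal.ofReal (g x + K)).toReal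
        ≤ (ENNReal.ofReal (φ v - φ u)).toReal := by
          apply ENNReal.toReal_mono ENNReal.ofReal_ne_top
          rw [e2, ← e4]; exact e3
      _ ≤ φ v - φ u := by
          rw [ENNReal.toReal_ofReal']
          exact max_le le_rfl (sub_nonneg.2 (hφmono huv))
  have hint : IntegrableOn (fun x => g x + K) (Set.Ioc u v) := by
    refine Integrable.mono' (integrable_const (2 * (K : ℝ))) hmeas ?_
    filter_upwards [hgb] with x hx
    have h := abs_le.1 hx
    rw [Real.norm_eq_abs, abs_le]
    constructor <;> linarith
  have hgint : IntegrableOn g (Set.Ioc u v) := by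
    have := hint.sub (integrable_const (K : ℝ))
    refine this.congr (by filter_upwards with x; simp)
  have hsplit : ∫ x in Set.Ioc u v, (g x + K) =
      (∫ x in Set.Ioc u v, g x) + (v - u) * K := by
    rw [integral_add hgint (integrable_const _)]
    simp [Real.volume_Ioc, ENNReal.toReal_ofReal (sub_nonneg.2 huv), huv]
  have := key
  rw [hsplit] at this
  have hφu : φ u = f u + K * u := by simp [hφdef, hcu]
  have hφv : φ v = f v + K * v := by simp [hφdef, hcv]
  rw [hφu, hφv] at this
  linarith

/-- FTC for Lipschitz functions with a.e. derivative. -/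
lemma ftc_eq (u v : ℝ) (huv : u ≤ v) (K : NNReal) (f g : ℝ → ℝ)
    (hf : LipschitzOnWith K f (Set.Icc u v))
    (hg : ∀ᵐ x, x ∈ Set.Ioo u v → HasDerivAt f (g x) x)
    (hgm : AEStronglyMeasurable g (volume.restrict (Set.Ioc u v)))
    (hgb : ∀ᵐ x ∂(volume.restrict (Set.Ioc u v)), |g x| ≤ K) :
    ∫ x in Set.Ioc u v, g x = f v - f u := by
  refine le_antisymm (ftc_half u v huv K f g hf hg hgm hgb) ?_
  have hneg := ftc_half u v huv K (-f) (-g) hf.neg ?_ hgm.neg ?_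
  · simp only [Pi.neg_apply] at hneg
    rw [MeasureTheory.integral_neg] at hneg
    linarith
  · filter_upwards [hg] with x hx hxm
    simpa using (hx hxm).neg
  · filter_upwards [hgb] with x hx
    simpa using hx

/-- `∫ t in x₀-r..x₀+r, (t - x₀) = 0`. -/
lemma integral_sub_center (x₀ r : ℝ) :
    ∫ t in (x₀ - r)..(x₀ + r), (t - x₀) = 0 := by
  rw [intervalIntegral.integral_comp_sub_right (fun x => x) x₀]
  have h1 : x₀ - r - x₀ = -r := by ring
  have h2 : x₀ + r - x₀ = r := by ring
  rw [h1, h2, integral_id]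
  ring

/-- `∫ t in x₀-r..x₀+r, |t - x₀| = r^2` for `r ≥ 0`. -/
lemma integral_abs_sub_center (x₀ r : ℝ) (hr : 0 ≤ r) :
    ∫ t in (x₀ - r)..(x₀ + r), |t - x₀| = r ^ 2 := by
  rw [intervalIntegral.integral_comp_sub_right (fun x => |x|) x₀]
  have h1 : x₀ - r - x₀ = -r := by ring
  have h2 : x₀ + r - x₀ = r := by ring
  rw [h1, h2]
  have hi1 : IntervalIntegrable (fun x : ℝ => |x|) volume (-r) 0 :=
    (continuous_abs).intervalIntegrable _ _
  have hi2 : IntervalIntegrable (fun x : ℝ => |x|) volume 0 r :=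
    (continuous_abs).intervalIntegrable _ _
  rw [← intervalIntegral.integral_add_adjacent_intervals hi1 hi2]
  have e1 : ∫ x in (-r)..(0:ℝ), |x| = r ^ 2 / 2 := by
    rw [intervalIntegral.integral_congr (g := fun x => -x) ?_]
    · rw [intervalIntegral.integral_neg, integral_id]; ring
    · intro x hx
      rw [uIcc_of_le (by linarith)] at hx
      exact abs_of_nonpos hx.2
  have e2 : ∫ x in (0:ℝ)..r, |x| = r ^ 2 / 2 := by
    rw [intervalIntegral.integral_congr (g := fun x => x) ?_]
    · rw [integral_id]; ring
    · intro x hx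
      rw [uIcc_of_le hr] at hx
      exact abs_of_nonneg hx.1
  rw [e1, e2]; ring

/-- Oscillation of an affine function over a symmetric interval. -/
lemma osc_linear (x₀ r m c : ℝ) (hr : 0 < r) :
    oscI (fun t => m + c * (t - x₀)) (x₀ - r) (x₀ + r) = |c| * r / 2 := by
  have hL : x₀ + r - (x₀ - r) = 2 * r := by ring
  have hint : ∫ s in (x₀ - r)..(x₀ + r), (m + c * (s - x₀)) = 2 * r * m := by
    rw [intervalIntegral.integral_add (f := fun _ => m) (g := fun s => c * (s - x₀)) (intervalIntegrable_const)
      ((continuous_const.mul (continuous_sub_right x₀)).intervalIntegrable _ _),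
      intervalIntegral.integral_const_mul, integral_sub_center]
    simp [hL]
  have hmean : (x₀ + r - (x₀ - r))⁻¹ * ∫ s in (x₀ - r)..(x₀ + r), (m + c * (s - x₀)) = m := by
    rw [hint, hL]
    field_simp
  unfold oscI
  rw [hmean, hL]
  have : ∀ t, |m + c * (t - x₀) - m| = |c| * |t - x₀| := by
    intro t
    rw [show m + c * (t - x₀) - m = c * (t - x₀) by ring, abs_mul]
  simp_rw [this]
  rw [intervalIntegral.integral_const_mul, integral_abs_sub_center x₀ r hr.le]
  field_simp

/-- Stability of the mean oscillation under `L¹` perturbation. -/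
lemma osc_diff (x y : ℝ) (hxy : x < y) (f₁ f₂ : ℝ → ℝ)
    (h₁ : IntervalIntegrable f₁ volume x y) (h₂ : IntervalIntegrable f₂ volume x y) :
    |oscI f₁ x y - oscI f₂ x y| ≤ 2 * (y - x)⁻¹ * ∫ t in x..y, |f₁ t - f₂ t| := by
  set ℓ := y - x with hℓdef
  have hℓ : 0 < ℓ := sub_pos.2 hxy
  set m₁ := ℓ⁻¹ * ∫ s in x..y, f₁ s with hm₁
  set m₂ := ℓ⁻¹ * ∫ s in x..y, f₂ s with hm₂
  set D := ∫ t in x..y, |f₁ t - f₂ t| with hD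
  have hDint : IntervalIntegrable (fun t => |f₁ t - f₂ t|) volume x y := (h₁.sub h₂).abs
  have hD0 : 0 ≤ D := by
    rw [hD, intervalIntegral.integral_of_le hxy.le]
    positivity
  have hm : |m₁ - m₂| ≤ ℓ⁻¹ * D := by
    have : m₁ - m₂ = ℓ⁻¹ * ∫ s in x..y, (f₁ s - f₂ s) := by
      rw [intervalIntegral.integral_sub h₁ h₂, hm₁, hm₂]; ring
    rw [this, abs_mul, abs_of_nonneg (by positivity : (0:ℝ) ≤ ℓ⁻¹)]
    exact mul_le_mul_of_nonneg_left
      (intervalIntegral.abs_integral_le_integral_abs hxy.le) (by positivity)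
  have hA1 : IntervalIntegrable (fun t => |f₁ t - m₁|) volume x y :=
    (h₁.sub intervalIntegrable_const).abs
  have hA2 : IntervalIntegrable (fun t => |f₂ t - m₂|) volume x y :=
    (h₂.sub intervalIntegrable_const).abs
  have hAB : abs ((∫ t in x..y, |f₁ t - m₁|) - ∫ t in x..y, |f₂ t - m₂|) ≤ D + ℓ * |m₁ - m₂| := by
    rw [← intervalIntegral.integral_sub hA1 hA2]
    refine (intervalIntegral.abs_integral_le_integral_abs hxy.le).trans ?_
    have hb : ∀ t ∈ Set.Icc x y, abs (|f₁ t - m₁| - |f₂ t - m₂|) ≤ |f₁ t - f₂ t| + |m₁ - m₂| := by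
      intro t _
      refine (abs_abs_sub_abs_le_abs_sub _ _).trans ?_
      have : f₁ t - m₁ - (f₂ t - m₂) = (f₁ t - f₂ t) - (m₁ - m₂) := by ring
      rw [this]
      exact abs_sub _ _
    calc ∫ t in x..y, abs (|f₁ t - m₁| - |f₂ t - m₂|)
        ≤ ∫ t in x..y, (|f₁ t - f₂ t| + |m₁ - m₂|) :=
          intervalIntegral.integral_mono_on hxy.le (hA1.sub hA2).abs
            (hDint.add intervalIntegrable_const) hb
      _ = D + ℓ * |m₁ - m₂| := by
          rw [intervalIntegral.integral_add hDint intervalIntegrable_const,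
            intervalIntegral.integral_const]
          simp [hD, hℓdef, smul_eq_mul]
  have hosc : oscI f₁ x y - oscI f₂ x y =
      ℓ⁻¹ * ((∫ t in x..y, |f₁ t - m₁|) - ∫ t in x..y, |f₂ t - m₂|) := by
    unfold oscI
    rw [← hℓdef, ← hm₁, ← hm₂]; ring
  rw [hosc, abs_mul, abs_of_nonneg (by positivity : (0:ℝ) ≤ ℓ⁻¹)]
  calc ℓ⁻¹ * abs ((∫ t in x..y, |f₁ t - m₁|) - ∫ t in x..y, |f₂ t - m₂|)
      ≤ ℓ⁻¹ * (D + ℓ * |m₁ - m₂|) := mul_le_mul_of_nonneg_left hAB (by positivity)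
    _ ≤ ℓ⁻¹ * (D + ℓ * (ℓ⁻¹ * D)) := by
        refine mul_le_mul_of_nonneg_left (add_le_add le_rfl ?_) (by positivity)
        exact mul_le_mul_of_nonneg_left hm hℓ.le
    _ = 2 * ℓ⁻¹ * D := by field_simp; ring

/-- If `f` is locally Lipschitz on `(a, b)` with a.e. derivative `g`, and `x₀` is a
Lebesgue continuity point of `g`, then the normalized oscillation over shrinking centered
intervals tends to `(1/4)|g(x₀)|`. -/
theorem osc_rescaled_limit_lebesgue_point (a b : ℝ) (hab : a < b) (f g : ℝ → ℝ)
    (hlip : ∀ x ∈ Set.Ioo a b, ∃ ε > (0 : ℝ), ∃ K : NNReal,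
      LipschitzOnWith K f (Metric.ball x ε ∩ Set.Ioo a b))
    (hderiv : ∀ᵐ x ∂(volume.restrict (Set.Ioo a b)), HasDerivAt f (g x) x)
    (x₀ : ℝ) (hx₀ : x₀ ∈ Set.Ioo a b)
    (hleb : Tendsto (fun r : ℝ => (2 * r)⁻¹ * ∫ s in (x₀ - r)..(x₀ + r), |g s - g x₀|)
      (nhdsWithin 0 (Set.Ioi 0)) (nhds 0)) :
    Tendsto (fun r : ℝ => (2 * r)⁻¹ * oscI f (x₀ - r) (x₀ + r))
      (nhdsWithin 0 (Set.Ioi 0)) (nhds ((1 / 4) * |g x₀|)) := by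
  obtain ⟨ε, hε, K, hK⟩ := hlip x₀ hx₀
  obtain ⟨ha, hb⟩ := hx₀
  set δ : ℝ := min (ε / 2) (min ((x₀ - a) / 2) ((b - x₀) / 2)) with hδdef
  have hδ : 0 < δ := lt_min (by linarith) (lt_min (by linarith) (by linarith))
  have hδε : δ < ε := (min_le_left _ _).trans_lt (by linarith)
  have hδa : a < x₀ - δ := by
    have : δ ≤ (x₀ - a) / 2 := (min_le_right _ _).trans (min_le_left _ _)
    linarith
  have hδb : x₀ + δ < b := by
    have : δ ≤ (b - x₀) / 2 := (min_le_right _ _).trans (min_le_right _ _)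
    linarith
  have hsub : Set.Icc (x₀ - δ) (x₀ + δ) ⊆ Metric.ball x₀ ε ∩ Set.Ioo a b := by
    intro y hy
    refine ⟨?_, by constructor <;> [linarith [hy.1]; linarith [hy.2]]⟩
    rw [Metric.mem_ball, Real.dist_eq]
    have : |y - x₀| ≤ δ := abs_le.2 ⟨by linarith [hy.1], by linarith [hy.2]⟩
    linarith
  have hfK : LipschitzOnWith K f (Set.Icc (x₀ - δ) (x₀ + δ)) := hK.mono hsub
  have hopen : IsOpen (Metric.ball x₀ ε ∩ Set.Ioo a b) := Metric.isOpen_ball.inter isOpen_Ioo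
  have hderiv' : ∀ᵐ x, x ∈ Set.Ioo a b → HasDerivAt f (g x) x :=
    (ae_restrict_iff' measurableSet_Ioo).1 hderiv
  have hgb' : ∀ᵐ x, x ∈ Metric.ball x₀ ε ∩ Set.Ioo a b → |g x| ≤ K := by
    filter_upwards [hderiv'] with x hx hmem
    have hd := hx hmem.2
    have := hd.hasFDerivAt.le_of_lipschitzOn (hopen.mem_nhds hmem) hK
    simpa using this
  have hgmE : AEStronglyMeasurable g (volume.restrict (Set.Ioo a b)) := by
    refine ((measurable_deriv f).aestronglyMeasurable).congr ?_
    refine (ae_restrict_iff' measurableSet_Ioo).2 ?_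
    filter_upwards [hderiv'] with x hx hm
    exact (hx hm).deriv
  -- ae measurability and bound on subintervals
  have hsubIoo : ∀ s t : ℝ, x₀ - δ ≤ s → t ≤ x₀ + δ →
      Set.Ioc s t ⊆ Metric.ball x₀ ε ∩ Set.Ioo a b := by
    intro s t hs ht z hz
    exact hsub ⟨hs.trans hz.1.le, hz.2.trans ht⟩
  have hgm : ∀ s t : ℝ, x₀ - δ ≤ s → t ≤ x₀ + δ →
      AEStronglyMeasurable g (volume.restrict (Set.Ioc s t)) := by
    intro s t hs ht
    refine hgmE.mono_measure (Measure.restrict_mono (fun z hz => ((hsubIoo s t hs ht) hz).2) le_rfl)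
  have hgb : ∀ s t : ℝ, x₀ - δ ≤ s → t ≤ x₀ + δ →
      ∀ᵐ x ∂(volume.restrict (Set.Ioc s t)), |g x| ≤ K := by
    intro s t hs ht
    filter_upwards [ae_restrict_of_ae hgb', ae_restrict_mem measurableSet_Ioc] with x h1 h2
    exact h1 (hsubIoo s t hs ht h2)
  have hgi : ∀ s t : ℝ, x₀ - δ ≤ s → s ≤ t → t ≤ x₀ + δ →
      IntervalIntegrable g volume s t := by
    intro s t hs hst ht
    rw [intervalIntegrable_iff_integrableOn_Ioc_of_le hst]
    refine Integrable.mono' (integrable_const (K : ℝ)) (hgm s t hs ht) ?_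
    filter_upwards [hgb s t hs ht] with x hx
    simpa using hx
  have hFTC : ∀ s t : ℝ, x₀ - δ ≤ s → s ≤ t → t ≤ x₀ + δ →
      ∫ x in s..t, g x = f t - f s := by
    intro s t hs hst ht
    rw [intervalIntegral.integral_of_le hst]
    refine ftc_eq s t hst K f g (hfK.mono (Set.Icc_subset_Icc hs ht)) ?_
      (hgm s t hs ht) (hgb s t hs ht)
    filter_upwards [hderiv'] with x hx hm
    exact hx ⟨by linarith [hm.1], by linarith [hm.2]⟩
  set c : ℝ := g x₀ with hcdef
  -- the key pointwise bound for small r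
  have hbound : ∀ r : ℝ, r ∈ Set.Ioo (0:ℝ) δ →
      abs ((2 * r)⁻¹ * oscI f (x₀ - r) (x₀ + r) - 1 / 4 * |c|) ≤
        2 * ((2 * r)⁻¹ * ∫ s in (x₀ - r)..(x₀ + r), |g s - c|) := by
    intro r hrr
    obtain ⟨hr, hrδ⟩ := hrr
    set x := x₀ - r with hxdef
    set y := x₀ + r with hydef
    have hxy : x < y := by simp only [hxdef, hydef]; linarith
    have hyx : y - x = 2 * r := by simp only [hxdef, hydef]; ring
    have hxs : x₀ - δ ≤ x := by simp only [hxdef]; linarith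
    have hys : y ≤ x₀ + δ := by simp only [hydef]; linarith
    set L : ℝ → ℝ := fun t => f x₀ + c * (t - x₀) with hLdef
    have hfc : ContinuousOn f (Set.Icc x y) :=
      hfK.continuousOn.mono (Set.Icc_subset_Icc hxs hys)
    have hfint : IntervalIntegrable f volume x y := by
      rw [intervalIntegrable_iff_integrableOn_Ioc_of_le hxy.le]
      exact (hfc.integrableOn_Icc).mono_set Set.Ioc_subset_Icc_self
    have hLint : IntervalIntegrable L volume x y :=
      (continuous_const.add (continuous_const.mul (continuous_sub_right x₀))).intervalIntegrable _ _
    have hgint : IntervalIntegrable g volume x y := hgi x y hxs hxy.le hys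
    have hgc : IntervalIntegrable (fun s => |g s - c|) volume x y :=
      (hgint.sub intervalIntegrable_const).abs
    set D := ∫ s in x..y, |g s - c| with hDdef
    have hD0 : 0 ≤ D := by
      rw [hDdef, intervalIntegral.integral_of_le hxy.le]
      positivity
    have hgcnn : 0 ≤ᶠ[ae (volume.restrict (Set.Ioc x y))] fun s => |g s - c| := by
      filter_upwards with s using abs_nonneg _
    have hptw : ∀ t ∈ Set.Icc x y, |f t - L t| ≤ D := by
      intro t ht
      have hftc : f t - f x₀ = ∫ s in x₀..t, g s := by
        rcases le_total x₀ t with h | h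
        · rw [hFTC x₀ t (by linarith) h (le_trans ht.2 hys)]
        · rw [intervalIntegral.integral_symm,
            hFTC t x₀ (le_trans hxs ht.1) h (by linarith)]
          ring
      have hgit : IntervalIntegrable g volume x₀ t := by
        rcases le_total x₀ t with h | h
        · exact hgi x₀ t (by linarith) h (le_trans ht.2 hys)
        · exact (hgi t x₀ (le_trans hxs ht.1) h (by linarith)).symm
      have heq2 : f t - L t = ∫ s in x₀..t, (g s - c) := by
        rw [intervalIntegral.integral_sub hgit intervalIntegrable_const,
          intervalIntegral.integral_const, ← hftc]
        simp only [hLdef, smul_eq_mul]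
        ring
      rw [heq2]
      rcases le_total x₀ t with h | h
      · refine (intervalIntegral.abs_integral_le_integral_abs h).trans ?_
        refine intervalIntegral.integral_mono_interval (by simp only [hxdef]; linarith)
          h ht.2 ?_ hgc
        filter_upwards with s using abs_nonneg _
      · rw [intervalIntegral.integral_symm, abs_neg]
        refine (intervalIntegral.abs_integral_le_integral_abs h).trans ?_
        refine intervalIntegral.integral_mono_interval ht.1 h (by simp only [hydef]; linarith)
          ?_ hgc
        filter_upwards with s using abs_nonneg _
    have hI : ∫ t in x..y, |f t - L t| ≤ 2 * r * D := by
      calc ∫ t in x..y, |f t - L t|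
          ≤ ∫ _t in x..y, D :=
            intervalIntegral.integral_mono_on hxy.le (hfint.sub hLint).abs
              intervalIntegrable_const hptw
        _ = 2 * r * D := by
            rw [intervalIntegral.integral_const, hyx, smul_eq_mul]
    have hosc := osc_diff x y hxy f L hfint hLint
    rw [hyx] at hosc
    have hoscL : oscI L x y = |c| * r / 2 := osc_linear x₀ r (f x₀) c hr
    have h4 : 1 / 4 * |c| = (2 * r)⁻¹ * oscI L x y := by
      rw [hoscL]
      field_simp
      ring
    rw [h4, ← mul_sub, abs_mul, abs_of_nonneg (by positivity : (0:ℝ) ≤ (2*r)⁻¹)]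
    calc (2*r)⁻¹ * |oscI f x y - oscI L x y|
        ≤ (2*r)⁻¹ * (2 * (2*r)⁻¹ * ∫ t in x..y, |f t - L t|) :=
          mul_le_mul_of_nonneg_left hosc (by positivity)
      _ ≤ (2*r)⁻¹ * (2 * (2*r)⁻¹ * (2 * r * D)) := by
          refine mul_le_mul_of_nonneg_left (mul_le_mul_of_nonneg_left hI (by positivity))
            (by positivity)
      _ = 2 * ((2*r)⁻¹ * D) := by
          field_simp
  -- conclude via squeeze
  have hE0 : Tendsto (fun r : ℝ =>
      2 * ((2 * r)⁻¹ * ∫ s in (x₀ - r)..(x₀ + r), |g s - g x₀|))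
      (nhdsWithin 0 (Set.Ioi 0)) (nhds 0) := by
    have := hleb.const_mul (2:ℝ)
    simpa using this
  have hev : ∀ᶠ r in nhdsWithin (0:ℝ) (Set.Ioi 0),
      ‖(2 * r)⁻¹ * oscI f (x₀ - r) (x₀ + r) - 1 / 4 * |g x₀|‖ ≤
        2 * ((2 * r)⁻¹ * ∫ s in (x₀ - r)..(x₀ + r), |g s - g x₀|) := by
    filter_upwards [Ioo_mem_nhdsGT_of_mem ⟨le_rfl, hδ⟩] with r hr
    rw [Real.norm_eq_abs]
    exact hbound r hr
  have hzero := squeeze_zero_norm' hev hE0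
  have := hzero.add (tendsto_const_nhds (x := 1 / 4 * |g x₀|)
    (f := nhdsWithin (0:ℝ) (Set.Ioi 0)))
  simpa using this
end
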